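/- Let k be a field and A a finite-dimensional associative unital k-algebra such that the canonical map Der_1(A) → HH^1(A) is surjective. Then: (a) if [Der_1(A), Der_1(A)] ⊆ Der_2(A) + IDer(A), then HH^1(A) is a solvable Lie algebra; (b) the image D_2 of Der_2(A) in HH^1(A) is a nilpotent Lie ideal of HH^1(A), and if HH^1(A) = L + D_2 for some Lie subalgebra L, then HH^1(A) is solvable if and only if L is solvable. -/

import Mathlib

/-!
By the Leibniz rule, if `f(A) ⊆ J^{a+1}` and `g(A) ⊆ J^{b+1}` then `[f, g](A) ⊆ J^{a+b+1}`.
Hence the images `D_m` of `Der_m(A)` in `HH^1(A)` satisfy `[D_{a+1}, D_{b+1}] ⊆ D_{a+b+1}`;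
as `D_1 = HH^1(A)`, every `D_{m+1}` is a Lie ideal, and as `J` is nilpotent, `D_n = 0` for
large `n`, so `D_2` is nilpotent. Solvability of `HH^1(A)` thus reduces to that of
`HH^1(A)/D_2`, which is abelian under the hypothesis of (a) and a quotient of `L` in (b).
-/

namespace HHPaper

attribute [local instance 100] LieRing.ofAssociativeRing

open MonoidAlgebra

section Derivations

variable {k A : Type*} [CommRing k] [Ring A] [Algebra k A]

/-- `f` is a derivation on the associative unital `k`-algebra `A`. -/
def IsDerivation (f : Module.End k A) : Prop :=
  ∀ a b : A, f (a * b) = f a * b + a * f b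

lemma IsDerivation.add {f g : Module.End k A} (hf : IsDerivation f) (hg : IsDerivation g) :
    IsDerivation (f + g) := by
  intro a b
  simp only [LinearMap.add_apply, hf a b, hg a b, add_mul, mul_add]
  abel

lemma IsDerivation.zero : IsDerivation (0 : Module.End k A) := by
  intro a b; simp

lemma IsDerivation.smul (c : k) {f : Module.End k A} (hf : IsDerivation f) :
    IsDerivation (c • f) := by
  intro a b
  simp only [LinearMap.smul_apply, hf a b, smul_add, smul_mul_assoc, mul_smul_comm]

lemma IsDerivation.lie {f g : Module.End k A} (hf : IsDerivation f) (hg : IsDerivation g) :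
    IsDerivation ⁅f, g⁆ := by
  intro a b
  simp only [Ring.lie_def, LinearMap.sub_apply, Module.End.mul_apply]
  rw [hg a b, hf a b, map_add, map_add, hf (g a) b, hf a (g b), hg (f a) b, hg a (f b)]
  simp only [sub_mul, mul_sub, add_mul, mul_add]
  abel

variable (k A) in
/-- The Lie algebra of derivations on `A`, as a Lie subalgebra of `Module.End k A`. -/
def derivLie : LieSubalgebra k (Module.End k A) where
  carrier := {f | IsDerivation f}
  add_mem' := fun hf hg => hf.add hg
  zero_mem' := IsDerivation.zero
  smul_mem' := fun c _ hf => hf.smul c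
  lie_mem' := fun hf hg => hf.lie hg

@[simp] lemma mem_derivLie {f : Module.End k A} :
    f ∈ derivLie k A ↔ IsDerivation f := Iff.rfl

variable (k) in
/-- The inner derivation `[c, -]` associated with `c : A`. -/
def innerDeriv (c : A) : Module.End k A :=
  LinearMap.mulLeft k c - LinearMap.mulRight k c

@[simp] lemma innerDeriv_apply (c a : A) : innerDeriv k c a = c * a - a * c := rfl

lemma innerDeriv_isDerivation (c : A) : IsDerivation (innerDeriv k c) := by
  intro a b
  simp only [innerDeriv_apply, sub_mul, mul_sub, mul_assoc]
  abel

lemma innerDeriv_add (c d : A) :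
    innerDeriv k (c + d) = innerDeriv k c + innerDeriv k d := by
  ext a; simp only [innerDeriv_apply, LinearMap.add_apply, add_mul, mul_add]; abel

lemma innerDeriv_smul (s : k) (c : A) :
    innerDeriv k (s • c) = s • innerDeriv k c := by
  ext a
  simp only [innerDeriv_apply, LinearMap.smul_apply, smul_sub, smul_mul_assoc, mul_smul_comm]

lemma innerDeriv_zero : innerDeriv k (0 : A) = 0 := by
  ext a; simp

variable (k A) in
/-- The Lie ideal of inner derivations inside the Lie algebra of derivations. -/
def innerIdeal : LieIdeal k (derivLie k A) where
  carrier := {f | ∃ c : A, (f : Module.End k A) = innerDeriv k c}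
  add_mem' := by
    rintro f g ⟨c, hc⟩ ⟨d, hd⟩
    exact ⟨c + d, by simp [innerDeriv_add, hc, hd]⟩
  zero_mem' := ⟨0, by simp [innerDeriv_zero]⟩
  smul_mem' := by
    rintro s f ⟨c, hc⟩
    exact ⟨s • c, by rw [innerDeriv_smul]; rw [← hc]; rfl⟩
  lie_mem := by
    rintro x m ⟨c, hc⟩
    refine ⟨(x : Module.End k A) c, ?_⟩
    have hx : IsDerivation (x : Module.End k A) := x.2
    ext a
    have hb : ((⁅x, m⁆ : derivLie k A) : Module.End k A) =
        ⁅(x : Module.End k A), (m : Module.End k A)⁆ := rfl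
    rw [hb, hc]
    simp only [Ring.lie_def, LinearMap.sub_apply, Module.End.mul_apply, innerDeriv_apply,
      map_sub, hx c a, hx a c]
    abel

variable (k A) in
/-- First Hochschild cohomology of `A`, as the quotient Lie algebra of derivations
modulo inner derivations. -/
abbrev HH1 := (derivLie k A) ⧸ (innerIdeal k A)

variable (k A) in
/-- The Jacobson radical of `A`, regarded as a `k`-subspace of `A`. -/
def jacRad : Submodule k A :=
  Submodule.restrictScalars k (Ideal.jacobson (⊥ : Ideal A))

variable (k A) in
/-- The Lie subalgebra of derivations with image contained in the `m`-th power of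
the Jacobson radical. -/
def derivRadLie (m : ℕ) : LieSubalgebra k (Module.End k A) where
  carrier := {f | IsDerivation f ∧ LinearMap.range f ≤ (jacRad k A) ^ m}
  add_mem' := by
    rintro f g ⟨hf, hf'⟩ ⟨hg, hg'⟩
    refine ⟨hf.add hg, ?_⟩
    rintro x ⟨a, rfl⟩
    exact add_mem (hf' ⟨a, rfl⟩) (hg' ⟨a, rfl⟩)
  zero_mem' := ⟨IsDerivation.zero, by rintro x ⟨a, rfl⟩; simp⟩
  smul_mem' := by
    rintro s f ⟨hf, hf'⟩
    refine ⟨hf.smul s, ?_⟩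
    rintro x ⟨a, rfl⟩
    exact Submodule.smul_mem _ s (hf' ⟨a, rfl⟩)
  lie_mem' := by
    rintro f g ⟨hf, hf'⟩ ⟨hg, hg'⟩
    refine ⟨hf.lie hg, ?_⟩
    rintro x ⟨a, rfl⟩
    have : ⁅f, g⁆ a = f (g a) - g (f a) := by
      simp [Ring.lie_def, Module.End.mul_apply]
    rw [this]
    exact sub_mem (hf' ⟨g a, rfl⟩) (hg' ⟨f a, rfl⟩)

@[simp] lemma mem_derivRadLie {m : ℕ} {f : Module.End k A} :
    f ∈ derivRadLie k A m ↔ IsDerivation f ∧ LinearMap.range f ≤ (jacRad k A) ^ m := Iff.rfl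

variable (k A) in
/-- The Loewy length of `A`: the least positive `n` with `J(A)^n = 0`. -/
noncomputable def loewyLength : ℕ :=
  sInf {n : ℕ | 0 < n ∧ (jacRad k A) ^ n = ⊥}

/-- A semisimple-style multiplicity freeness: any two isomorphic simple submodules
coincide. -/
def IsMultiplicityFree (R M : Type*) [Ring R] [AddCommGroup M] [Module R M] : Prop :=
  ∀ S T : Submodule R M, IsSimpleModule R S → IsSimpleModule R T →
    Nonempty (S ≃ₗ[R] T) → S = T

end Derivations


section GroupAlgebra

open MonoidAlgebra

variable (k : Type*) [CommRing k] {P E : Type*} [Group P] [Group E]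

/-- The subgroup `[P,E]` generated by the elements `(ᵉu)u⁻¹`. -/
def commSubgroupE (φ : E →* MulAut P) : Subgroup P :=
  Subgroup.closure {x : P | ∃ (e : E) (u : P), x = φ e u * u⁻¹}

/-- A linear endomorphism of `kP` is `E`-stable if it commutes with the `E`-action. -/
def IsEStable (φ : E →* MulAut P) (f : Module.End k (MonoidAlgebra k P)) : Prop :=
  ∀ (e : E) (a : MonoidAlgebra k P),
    f (MonoidAlgebra.domCongr k k (φ e) a) = MonoidAlgebra.domCongr k k (φ e) (f a)

/-- The Lie algebra `Der(kP)^E` of `E`-stable derivations on the group algebra `kP`. -/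
def eStableDerivLie (φ : E →* MulAut P) :
    LieSubalgebra k (Module.End k (MonoidAlgebra k P)) where
  carrier := {f | IsDerivation f ∧ IsEStable k φ f}
  add_mem' := by
    rintro f g ⟨hf, hf'⟩ ⟨hg, hg'⟩
    exact ⟨hf.add hg, fun e a => by simp [LinearMap.add_apply, hf' e a, hg' e a]⟩
  zero_mem' := ⟨IsDerivation.zero, fun e a => by simp⟩
  smul_mem' := by
    rintro s f ⟨hf, hf'⟩
    refine ⟨hf.smul s, fun e a => ?_⟩
    simp only [LinearMap.smul_apply, hf' e a, map_smul]
  lie_mem' := by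
    rintro f g ⟨hf, hf'⟩ ⟨hg, hg'⟩
    refine ⟨hf.lie hg, fun e a => ?_⟩
    simp only [Ring.lie_def, LinearMap.sub_apply, Module.End.mul_apply, hf' e, hg' e, map_sub]

@[simp] lemma mem_eStableDerivLie {φ : E →* MulAut P} {f : Module.End k (MonoidAlgebra k P)} :
    f ∈ eStableDerivLie k φ ↔ IsDerivation f ∧ IsEStable k φ f := Iff.rfl

end GroupAlgebra

section Commutant

variable (k : Type*) [CommRing k] {Q : Type*} [AddCommGroup Q] [Module k Q]
  {E : Type*} [Group E]

/-- The Lie subalgebra of `Module.End k Q` of endomorphisms commuting with a given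
`E`-action, i.e. `End_{kE}(Q)`. -/
def commutantLie (ρ : E →* (Q ≃ₗ[k] Q)) : LieSubalgebra k (Module.End k Q) where
  carrier := {g | ∀ (e : E) (x : Q), g (ρ e x) = ρ e (g x)}
  add_mem' := by
    intro f g hf hg e x
    simp [LinearMap.add_apply, hf e x, hg e x]
  zero_mem' := by intro e x; simp
  smul_mem' := by
    intro s f hf e x
    simp [LinearMap.smul_apply, hf e x]
  lie_mem' := by
    intro f g hf hg e x
    simp only [Ring.lie_def, LinearMap.sub_apply, Module.End.mul_apply, hf e, hg e, map_sub]

end Commutant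

section LieAlgebra

variable {R L : Type*} [CommRing R] [LieRing L] [LieAlgebra R L] (I : LieIdeal R L)

def quotientMk : L →ₗ⁅R⁆ L ⧸ I :=
  { (LieSubmodule.Quotient.mk' I).toLinearMap with
    map_lie' := fun {x y} => LieSubmodule.Quotient.mk_bracket I x y }

lemma ker_quotientMk : (quotientMk I).ker = I := by
  ext x
  exact LieSubmodule.Quotient.mk_eq_zero I

lemma isSolvable_of_derivedSeries_le [LieAlgebra.IsSolvable I] {j : ℕ}
    (h : LieAlgebra.derivedSeries R L j ≤ I) : LieAlgebra.IsSolvable L := by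
  obtain ⟨l, hl⟩ := LieAlgebra.IsSolvable.solvable R I
  refine LieAlgebra.IsSolvable.mk (R := R) (k := l + j) (le_bot_iff.mp ?_)
  calc LieAlgebra.derivedSeries R L (l + j)
      = LieAlgebra.derivedSeriesOfIdeal R L l (LieAlgebra.derivedSeries R L j) :=
        LieAlgebra.derivedSeriesOfIdeal_add ⊤ l j
    _ ≤ LieAlgebra.derivedSeriesOfIdeal R L l I := LieAlgebra.derivedSeriesOfIdeal_mono h l
    _ = ⊥ := (LieIdeal.derivedSeries_eq_bot_iff I l).mp hl

lemma isSolvable_of_lie_mem [LieAlgebra.IsSolvable I] (h : ∀ x y : L, ⁅x, y⁆ ∈ I) :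
    LieAlgebra.IsSolvable L := by
  refine isSolvable_of_derivedSeries_le I (j := 1) ?_
  rw [LieAlgebra.derivedSeries_def, LieAlgebra.derivedSeriesOfIdeal_succ,
    LieAlgebra.derivedSeriesOfIdeal_zero, LieSubmodule.lie_le_iff]
  exact fun x _ y _ => h x y

lemma isSolvable_of_isSolvable_quotient [LieAlgebra.IsSolvable I]
    [LieAlgebra.IsSolvable (L ⧸ I)] : LieAlgebra.IsSolvable L := by
  obtain ⟨j, hj⟩ := LieAlgebra.IsSolvable.solvable R (L ⧸ I)
  refine isSolvable_of_derivedSeries_le I (j := j) ?_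
  have surj : Function.Surjective (quotientMk I) := LieSubmodule.Quotient.surjective_mk' I
  rw [← ker_quotientMk I, ← LieIdeal.map_eq_bot_iff, LieIdeal.derivedSeries_map_eq j surj,
    hj]

lemma isSolvable_of_forall_eq_add (K : LieSubalgebra R L) [LieAlgebra.IsSolvable K]
    [LieAlgebra.IsSolvable I] (h : ∀ x : L, ∃ l ∈ K, ∃ d ∈ I, x = l + d) :
    LieAlgebra.IsSolvable L := by
  have surj : Function.Surjective ((quotientMk I).comp K.incl) := by
    intro q
    obtain ⟨x, rfl⟩ := LieSubmodule.Quotient.surjective_mk' I q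
    obtain ⟨l, hl, d, hd, rfl⟩ := h x
    refine ⟨⟨l, hl⟩, ?_⟩
    rw [map_add, (LieSubmodule.Quotient.mk_eq_zero I).mpr hd, add_zero]
    rfl
  have : LieAlgebra.IsSolvable (L ⧸ I) := surj.lieAlgebra_isSolvable
  exact isSolvable_of_isSolvable_quotient I

lemma isNilpotent_of_filtration (F : ℕ → Submodule R L) (h₀ : I.toSubmodule ≤ F 0)
    (hlie : ∀ j, ∀ x ∈ I, ∀ y ∈ F j, ⁅x, y⁆ ∈ F (j + 1)) {n : ℕ} (hn : F n = ⊥) :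
    LieModule.IsNilpotent I I := by
  have key : ∀ j, (LieModule.lowerCentralSeries R I I j).toSubmodule ≤
      (F j).comap I.toSubmodule.subtype := by
    intro j
    induction j with
    | zero => exact fun x _ => h₀ x.2
    | succ j ih =>
      rw [LieModule.lowerCentralSeries_succ, LieSubmodule.lieIdeal_oper_eq_linear_span',
        Submodule.span_le]
      rintro _ ⟨x, -, y, hy, rfl⟩
      exact hlie j x x.2 y (ih hy)
  rw [LieModule.isNilpotent_iff R]
  refine ⟨n, eq_bot_iff.mpr fun x hx => ?_⟩
  have hx' : (x : L) ∈ F n := key n hx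
  rw [hn, Submodule.mem_bot] at hx'
  exact (LieSubmodule.mem_bot x).mpr (Subtype.ext hx')

end LieAlgebra

section Derivations

variable {k A : Type*} [CommRing k] [Ring A] [Algebra k A]

lemma IsDerivation.map_mem_pow {f : Module.End k A} (hf : IsDerivation f)
    {I : Submodule k A} {m : ℕ} (hrange : LinearMap.range f ≤ I ^ (m + 1)) (s : ℕ) {x : A}
    (hx : x ∈ I ^ (s + 1)) :
    f x ∈ I ^ (m + s + 1) := by
  induction s generalizing x with
  | zero => exact hrange ⟨x, rfl⟩
  | succ s ih =>
    rw [Submodule.pow_succ] at hx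
    refine Submodule.mul_induction_on hx (fun a ha b hb => ?_) fun y z hy hz => ?_
    · rw [hf a b]
      refine add_mem ?_ ?_
      · have := Submodule.mul_mem_mul (ih ha) hb
        rwa [← Submodule.pow_succ, show m + s + 1 + 1 = m + (s + 1) + 1 by omega] at this
      · have := Submodule.mul_mem_mul ha (hrange ⟨b, rfl⟩)
        rwa [← pow_add, show s + 1 + (m + 1) = m + (s + 1) + 1 by omega] at this
    · rw [map_add]
      exact add_mem hy hz

lemma lie_mem_derivRadLie {f g : Module.End k A} {a b : ℕ} (hf : f ∈ derivRadLie k A (a + 1))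
    (hg : g ∈ derivRadLie k A (b + 1)) : ⁅f, g⁆ ∈ derivRadLie k A (a + b + 1) := by
  refine ⟨hf.1.lie hg.1, ?_⟩
  rintro _ ⟨x, rfl⟩
  rw [Ring.lie_def, LinearMap.sub_apply, Module.End.mul_apply, Module.End.mul_apply]
  refine sub_mem (hf.1.map_mem_pow hf.2 b (hg.2 ⟨x, rfl⟩)) ?_
  rw [add_comm a b]
  exact hg.1.map_mem_pow hg.2 a (hf.2 ⟨x, rfl⟩)

lemma eq_zero_of_mem_derivRadLie {f : Module.End k A} {m : ℕ} (hf : f ∈ derivRadLie k A m)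
    (hm : jacRad k A ^ m = ⊥) : f = 0 :=
  LinearMap.range_eq_bot.mp (le_bot_iff.mp (hm ▸ hf.2))

lemma exists_jacRad_pow_eq_bot {k A : Type*} [Field k] [Ring A] [Algebra k A]
    [FiniteDimensional k A] : ∃ n, jacRad k A ^ (n + 1) = ⊥ := by
  have : IsArtinianRing A := IsArtinianRing.of_finite k A
  obtain ⟨n, hn⟩ := IsArtinianRing.isNilpotent_jacobson_bot (R := A)
  refine ⟨n, ?_⟩
  rw [jacRad, ← Submodule.restrictScalars_pow n.succ_ne_zero, Submodule.pow_succ, hn,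
    zero_mul, Submodule.zero_eq_bot, Submodule.restrictScalars_bot]

end Derivations

section FirstHochschild

variable {k A : Type*} [CommRing k] [Ring A] [Algebra k A]

variable (k A) in
/-- The image `D_m` of `Der_m(A)` in `HH^1(A)`. -/
def radImage (m : ℕ) : Submodule k (HH1 k A) :=
  ((derivRadLie k A m).toSubmodule.comap (derivLie k A).toSubmodule.subtype).map
    (LieSubmodule.Quotient.mk' (innerIdeal k A)).toLinearMap

lemma mem_radImage {m : ℕ} {x : HH1 k A} :
    x ∈ radImage k A m ↔ ∃ f : derivLie k A, (f : Module.End k A) ∈ derivRadLie k A m ∧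
      LieSubmodule.Quotient.mk (N := innerIdeal k A) f = x := Iff.rfl

lemma lie_mem_radImage {a b : ℕ} {x y : HH1 k A} (hx : x ∈ radImage k A (a + 1))
    (hy : y ∈ radImage k A (b + 1)) : ⁅x, y⁆ ∈ radImage k A (a + b + 1) := by
  obtain ⟨f, hf, rfl⟩ := hx
  obtain ⟨g, hg, rfl⟩ := hy
  exact ⟨⁅f, g⁆, lie_mem_derivRadLie hf hg, LieSubmodule.Quotient.mk_bracket _ f g⟩

lemma mk_mem_radImage_of_sub_innerDeriv_mem {f : derivLie k A} {c : A} {m : ℕ}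
    (h : (f : Module.End k A) - innerDeriv k c ∈ derivRadLie k A m) :
    LieSubmodule.Quotient.mk (N := innerIdeal k A) f ∈ radImage k A m := by
  refine ⟨⟨_, h.1⟩, h, ?_⟩
  show LieSubmodule.Quotient.mk' _ _ = LieSubmodule.Quotient.mk' _ _
  rw [eq_comm, ← sub_eq_zero, ← map_sub, LieSubmodule.Quotient.mk_eq_zero]
  exact ⟨c, sub_sub_cancel _ _⟩

lemma radImage_eq_bot {m : ℕ} (hm : jacRad k A ^ m = ⊥) : radImage k A m = ⊥ := by
  refine eq_bot_iff.mpr ?_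
  rintro _ ⟨f, hf, rfl⟩
  obtain rfl : f = 0 := Subtype.ext (eq_zero_of_mem_derivRadLie hf hm)
  exact zero_mem _

/-- `D_{m+1}`, a Lie ideal once `D_1 = HH^1(A)`. -/
def radImageIdeal (h : radImage k A 1 = ⊤) (m : ℕ) : LieIdeal k (HH1 k A) :=
  { radImage k A (m + 1) with
    lie_mem := fun {x _} hy => by
      have := lie_mem_radImage (a := 0) (h ▸ Submodule.mem_top : x ∈ _) hy
      rwa [zero_add] at this }

lemma isNilpotent_radImageIdeal_one {k A : Type*} [Field k] [Ring A] [Algebra k A]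
    [FiniteDimensional k A] (h : radImage k A 1 = ⊤) :
    LieModule.IsNilpotent (radImageIdeal h 1) (radImageIdeal h 1) := by
  obtain ⟨n, hn⟩ := exists_jacRad_pow_eq_bot (k := k) (A := A)
  refine isNilpotent_of_filtration _ (fun j => radImage k A (j + 1)) (h ▸ le_top)
    (fun j x hx y hy => ?_) (radImage_eq_bot hn)
  simpa only [add_comm 1 j] using lie_mem_radImage (a := 1) hx hy

end FirstHochschild

/-- Suppose that the canonical map `Der_1(A) → HH^1(A)` is surjective. Then:
(a) if `[Der_1(A), Der_1(A)] ⊆ Der_2(A) + IDer(A)`, then `HH^1(A)` is solvable;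
(b) the image `D_2` of `Der_2(A)` in `HH^1(A)` is a nilpotent Lie ideal, and if
`HH^1(A) = L + D_2` for a Lie subalgebra `L`, then `HH^1(A)` is solvable iff `L` is. -/
theorem stmt17 (k A : Type*) [Field k] [Ring A] [Algebra k A] [FiniteDimensional k A]
    (hsurj : ∀ x : HH1 k A, ∃ f : derivLie k A, (f : Module.End k A) ∈ derivRadLie k A 1 ∧
      LieSubmodule.Quotient.mk (N := innerIdeal k A) f = x) :
    -- (a)
    ((∀ f g : Module.End k A, f ∈ derivRadLie k A 1 → g ∈ derivRadLie k A 1 →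
        ∃ c : A, ⁅f, g⁆ - innerDeriv k c ∈ derivRadLie k A 2) →
      LieAlgebra.IsSolvable (HH1 k A)) ∧
    -- (b)
    (∃ D2 : LieIdeal k (HH1 k A),
      (∀ x : HH1 k A, x ∈ D2 ↔ ∃ f : derivLie k A, (f : Module.End k A) ∈ derivRadLie k A 2 ∧
          LieSubmodule.Quotient.mk (N := innerIdeal k A) f = x) ∧
      LieModule.IsNilpotent D2 D2 ∧
      (∀ L : LieSubalgebra k (HH1 k A),
        (∀ x : HH1 k A, ∃ l ∈ L, ∃ d ∈ D2, x = l + d) →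
        (LieAlgebra.IsSolvable (HH1 k A) ↔ LieAlgebra.IsSolvable L))) := by
  have htop : radImage k A 1 = ⊤ := eq_top_iff.mpr fun x _ => mem_radImage.mpr (hsurj x)
  set D2 := radImageIdeal htop 1
  have hnil : LieModule.IsNilpotent D2 D2 := isNilpotent_radImageIdeal_one htop
  refine ⟨fun hcomm => ?_, D2, fun _ => mem_radImage, hnil, fun L hL => ?_⟩
  · refine isSolvable_of_lie_mem D2 fun x y => ?_
    obtain ⟨f, hf, rfl⟩ := hsurj x
    obtain ⟨g, hg, rfl⟩ := hsurj y
    obtain ⟨c, hc⟩ := hcomm f g hf hg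
    rw [← LieSubmodule.Quotient.mk_bracket]
    exact mk_mem_radImage_of_sub_innerDeriv_mem hc
  · exact ⟨fun _ => Function.Injective.lieAlgebra_isSolvable (f := L.incl) Subtype.val_injective,
      fun _ => isSolvable_of_forall_eq_add D2 L hL⟩

end HHPaper
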